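/- Let σ > 0 and let v_1, …, v_M ∈ ℝⁿ with ‖v_m‖ ≤ 1 for all m. Define positive definite matrices by Σ_0 = I and Σ_{m}⁻¹ = Σ_{m-1}⁻¹ + (1/σ²) v_m v_mᵀ, and set κ_m = √(v_mᵀ Σ_{m-1} v_m). Then Σ_{m=1}^{M} κ_m ≤ √( M · n · ln(1 + M/(n σ²)) / ln(1 + 1/σ²) ). -/

import Mathlib

/-!
Write `q_m = κ_m² = v_mᵀ Σ_{m-1} v_m`. Since `Σ_{m-1}⁻¹ ⪰ I` and `‖v_m‖ ≤ 1`, each `q_m` lies in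
`[0, 1]`, so concavity of `b ↦ log (1 + b/σ²)` gives `q_m log (1 + 1/σ²) ≤ log (1 + q_m/σ²)`.
By the matrix determinant lemma the right-hand sides add up to `log det Σ_M⁻¹`, which AM-GM on the
eigenvalues bounds by `n log (tr Σ_M⁻¹ / n) ≤ n log (1 + M/(nσ²))`. Cauchy-Schwarz turns the
resulting bound on `∑ q_m` into one on `∑ √q_m`.
-/

open Matrix Finset

theorem Matrix.det_add_vecMulVec {ι R : Type*} [Fintype ι] [DecidableEq ι] [CommRing R]
    {A : Matrix ι ι R} (hA : IsUnit A.det) (u w : ι → R) :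
    (A + vecMulVec u w).det = A.det * (1 + w ⬝ᵥ (A⁻¹ *ᵥ u)) := by
  rw [vecMulVec_eq Unit, det_add_replicateCol_mul_replicateRow hA, Matrix.mul_assoc,
    ← replicateCol_mulVec, det_unique (1 + _ : Matrix Unit Unit R)]
  rfl

theorem Matrix.posDef_of_posSemidef_sub_one {ι : Type*} [DecidableEq ι] {A : Matrix ι ι ℝ}
    (h : (A - 1).PosSemidef) : A.PosDef := by
  simpa using PosDef.one.add_posSemidef h

section

variable {ι : Type*} [Fintype ι] [DecidableEq ι]

theorem Matrix.dotProduct_inv_mulVec_le_dotProduct {A : Matrix ι ι ℝ} (h : (A - 1).PosSemidef)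
    (v : ι → ℝ) : v ⬝ᵥ (A⁻¹ *ᵥ v) ≤ v ⬝ᵥ v := by
  set w := A⁻¹ *ᵥ v
  have hAw : A *ᵥ w = v := by
    rw [mulVec_mulVec, mul_nonsing_inv _ (posDef_of_posSemidef_sub_one h).det_pos.ne'.isUnit,
      one_mulVec]
  -- `w ⬝ w ≤ w ⬝ A w = v ⬝ w`, and `0 ≤ (v - w) ⬝ (v - w)` then gives `v ⬝ w ≤ v ⬝ v`.
  have hww : w ⬝ᵥ w ≤ v ⬝ᵥ w := by
    have := h.dotProduct_mulVec_nonneg w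
    rw [star_trivial, sub_mulVec, one_mulVec, dotProduct_sub, hAw, dotProduct_comm w v] at this
    linarith
  have hsq : 0 ≤ (v - w) ⬝ᵥ (v - w) := by simpa using dotProduct_star_self_nonneg (v - w)
  simp only [sub_dotProduct, dotProduct_sub, dotProduct_comm w v] at hsq
  linarith

theorem Matrix.PosDef.dotProduct_inv_mulVec_nonneg {A : Matrix ι ι ℝ} (hA : A.PosDef)
    (v : ι → ℝ) : 0 ≤ v ⬝ᵥ (A⁻¹ *ᵥ v) := by
  simpa using hA.inv.posSemidef.dotProduct_mulVec_nonneg v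

theorem Matrix.det_le_trace_div_card_pow [Nonempty ι] {A : Matrix ι ι ℝ} (hA : A.PosSemidef) :
    A.det ≤ (A.trace / Fintype.card ι) ^ Fintype.card ι := by
  have hnonneg := hA.eigenvalues_nonneg
  have hcard : Fintype.card ι ≠ 0 := Fintype.card_ne_zero
  have amgm := Real.geom_mean_le_arith_mean univ (fun _ ↦ 1) hA.isHermitian.eigenvalues
    (fun _ _ ↦ zero_le_one) (by simp [Fintype.card_pos]) (fun i _ ↦ hnonneg i)
  simp only [Real.rpow_one, sum_const, card_univ, nsmul_eq_mul, mul_one, one_mul] at amgm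
  rw [hA.isHermitian.det_eq_prod_eigenvalues, hA.isHermitian.trace_eq_sum_eigenvalues]
  simp only [RCLike.ofReal_real_eq_id, id]
  calc ∏ i, hA.isHermitian.eigenvalues i
      = ((∏ i, hA.isHermitian.eigenvalues i) ^ ((Fintype.card ι : ℝ)⁻¹)) ^ Fintype.card ι :=
        (Real.rpow_inv_natCast_pow (prod_nonneg fun i _ ↦ hnonneg i) hcard).symm
    _ ≤ _ := pow_le_pow_left₀ (Real.rpow_nonneg (prod_nonneg fun i _ ↦ hnonneg i) _) amgm _

theorem Real.mul_log_one_add_le_log_one_add_mul {c b : ℝ} (hc : -1 < c) (hb₀ : 0 ≤ b)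
    (hb₁ : b ≤ 1) : b * Real.log (1 + c) ≤ Real.log (1 + c * b) := by
  rw [← Real.log_rpow (by linarith), mul_comm c b]
  exact Real.log_le_log (Real.rpow_pos_of_pos (by linarith) _)
    (rpow_one_add_le_one_add_mul_self hc.le hb₀ hb₁)

end

section RankOneUpdates

variable {ι : Type*} [Fintype ι] [DecidableEq ι] {c : ℝ} {v : ℕ → ι → ℝ}
  {S : ℕ → Matrix ι ι ℝ}

theorem posSemidef_sub_one_of_rankOne_updates (hc : 0 ≤ c) (h0 : S 0 = 1)
    (hrec : ∀ m, S (m + 1) = S m + c • vecMulVec (v m) (v m)) (m : ℕ) :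
    (S m - 1).PosSemidef := by
  induction m with
  | zero => simpa [h0] using PosSemidef.zero
  | succ m ih =>
    rw [hrec, add_sub_right_comm]
    simpa using ih.add ((posSemidef_vecMulVec_self_star (v m)).smul hc)

theorem posDef_of_rankOne_updates (hc : 0 ≤ c) (h0 : S 0 = 1)
    (hrec : ∀ m, S (m + 1) = S m + c • vecMulVec (v m) (v m)) (m : ℕ) : (S m).PosDef :=
  posDef_of_posSemidef_sub_one (posSemidef_sub_one_of_rankOne_updates hc h0 hrec m)

theorem det_eq_prod_of_rankOne_updates (hc : 0 ≤ c) (h0 : S 0 = 1)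
    (hrec : ∀ m, S (m + 1) = S m + c • vecMulVec (v m) (v m)) (m : ℕ) :
    (S m).det = ∏ k ∈ range m, (1 + c * (v k ⬝ᵥ ((S k)⁻¹ *ᵥ v k))) := by
  induction m with
  | zero => simp [h0]
  | succ m ih =>
    rw [hrec, ← smul_vecMulVec,
      det_add_vecMulVec (posDef_of_rankOne_updates hc h0 hrec m).det_pos.ne'.isUnit, ih,
      prod_range_succ, mulVec_smul, dotProduct_smul, smul_eq_mul]

theorem trace_eq_of_rankOne_updates (h0 : S 0 = 1)
    (hrec : ∀ m, S (m + 1) = S m + c • vecMulVec (v m) (v m)) (m : ℕ) :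
    (S m).trace = Fintype.card ι + c * ∑ k ∈ range m, v k ⬝ᵥ v k := by
  induction m with
  | zero => simp [h0]
  | succ m ih =>
    rw [hrec, trace_add, trace_smul, trace_vecMulVec, ih, sum_range_succ, smul_eq_mul]
    ring

theorem sum_dotProduct_inv_mulVec_mul_log_le_of_rankOne_updates [Nonempty ι] (hc : 0 < c)
    (hv : ∀ m, v m ⬝ᵥ v m ≤ 1) (h0 : S 0 = 1)
    (hrec : ∀ m, S (m + 1) = S m + c • vecMulVec (v m) (v m)) (M : ℕ) :
    (∑ k ∈ range M, v k ⬝ᵥ ((S k)⁻¹ *ᵥ v k)) * Real.log (1 + c) ≤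
      Fintype.card ι * Real.log (1 + c * M / Fintype.card ι) := by
  set n := Fintype.card ι
  have hn : (0 : ℝ) < n := Nat.cast_pos.mpr Fintype.card_pos
  have hS := posDef_of_rankOne_updates hc.le h0 hrec
  have hq₀ k : 0 ≤ v k ⬝ᵥ ((S k)⁻¹ *ᵥ v k) := (hS k).dotProduct_inv_mulVec_nonneg (v k)
  have hq₁ k : v k ⬝ᵥ ((S k)⁻¹ *ᵥ v k) ≤ 1 :=
    (dotProduct_inv_mulVec_le_dotProduct
      (posSemidef_sub_one_of_rankOne_updates hc.le h0 hrec k) (v k)).trans (hv k)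
  have htrace : (S M).trace / n ≤ 1 + c * M / n := by
    have hsum : ∑ k ∈ range M, v k ⬝ᵥ v k ≤ M := by
      simpa using sum_le_sum fun k (_ : k ∈ range M) ↦ hv k
    rw [trace_eq_of_rankOne_updates h0 hrec, add_div, div_self hn.ne']
    gcongr
  calc (∑ k ∈ range M, v k ⬝ᵥ ((S k)⁻¹ *ᵥ v k)) * Real.log (1 + c)
      = ∑ k ∈ range M, v k ⬝ᵥ ((S k)⁻¹ *ᵥ v k) * Real.log (1 + c) := sum_mul ..
    _ ≤ ∑ k ∈ range M, Real.log (1 + c * (v k ⬝ᵥ ((S k)⁻¹ *ᵥ v k))) :=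
        sum_le_sum fun k _ ↦ Real.mul_log_one_add_le_log_one_add_mul (by linarith) (hq₀ k) (hq₁ k)
    _ = Real.log (S M).det := by
        rw [det_eq_prod_of_rankOne_updates hc.le h0 hrec, Real.log_prod]
        exact fun k _ ↦ (add_pos_of_pos_of_nonneg one_pos (mul_nonneg hc.le (hq₀ k))).ne'
    _ ≤ Real.log (((S M).trace / n) ^ n) :=
        Real.log_le_log (hS M).det_pos (det_le_trace_div_card_pow (hS M).posSemidef)
    _ ≤ Real.log ((1 + c * M / n) ^ n) := by
        gcongr
        · exact (hS M).det_pos.trans_le (det_le_trace_div_card_pow (hS M).posSemidef)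
        · exact div_nonneg (hS M).posSemidef.trace_nonneg hn.le
    _ = n * Real.log (1 + c * M / n) := Real.log_pow ..

end RankOneUpdates

/-- Key confidence-width summation bound: with `Σ₀⁻¹ = I`,
`Σ_m⁻¹ = Σ_{m-1}⁻¹ + (1/σ²) v_m v_mᵀ`, `‖v_m‖ ≤ 1`, and
`κ_m = √(v_mᵀ Σ_{m-1} v_m)`, one has
`Σ_{m} κ_m ≤ √(M n ln(1 + M/(n σ²)) / ln(1 + 1/σ²))`. -/
theorem sum_confidence_widths_bound {n : ℕ} (hn : 0 < n) (σ : ℝ) (hσ : 0 < σ)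
    (M : ℕ) (v : ℕ → (Fin n → ℝ))
    (hv : ∀ m, Real.sqrt (∑ i, (v m i) ^ 2) ≤ 1)
    (Sinv : ℕ → Matrix (Fin n) (Fin n) ℝ)
    (h0 : Sinv 0 = 1)
    (hrec : ∀ m, Sinv (m + 1) = Sinv m + (σ ^ 2)⁻¹ • vecMulVec (v m) (v m)) :
    ∑ m ∈ Finset.range M, Real.sqrt (v m ⬝ᵥ ((Sinv m)⁻¹ *ᵥ v m)) ≤
      Real.sqrt ((M : ℝ) * n * Real.log (1 + (M : ℝ) / (n * σ ^ 2)) /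
        Real.log (1 + 1 / σ ^ 2)) := by
  have : Nonempty (Fin n) := Fin.pos_iff_nonempty.mp hn
  set q := fun m ↦ v m ⬝ᵥ ((Sinv m)⁻¹ *ᵥ v m)
  have hq m : 0 ≤ q m :=
    (posDef_of_rankOne_updates (by positivity) h0 hrec m).dotProduct_inv_mulVec_nonneg (v m)
  have hL : 0 < Real.log (1 + 1 / σ ^ 2) := Real.log_pos (lt_add_of_pos_right _ (by positivity))
  have potential : (∑ m ∈ range M, q m) * Real.log (1 + 1 / σ ^ 2) ≤
      n * Real.log (1 + M / (n * σ ^ 2)) := by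
    have := sum_dotProduct_inv_mulVec_mul_log_le_of_rankOne_updates (by positivity)
      (fun m ↦ by simpa [dotProduct, sq] using hv m) h0 hrec M
    have hrw : (σ ^ 2)⁻¹ * M / n = M / (n * σ ^ 2) := by ring
    rwa [Fintype.card_fin, hrw, ← one_div] at this
  calc ∑ m ∈ range M, √(q m) = ∑ m ∈ range M, √1 * √(q m) := by simp
    _ ≤ √(∑ m ∈ range M, 1) * √(∑ m ∈ range M, q m) :=
        Real.sum_sqrt_mul_sqrt_le _ (fun _ ↦ zero_le_one) hq
    _ = √(M * ∑ m ∈ range M, q m) := by simp [Real.sqrt_mul]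
    _ ≤ _ := by
        gcongr
        rw [le_div_iff₀ hL, mul_assoc, mul_assoc]
        exact mul_le_mul_of_nonneg_left potential M.cast_nonneg
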